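/- Let Z be a measurable space, D a probability distribution on Z, W ⊆ ℝ^d convex, f : W × Z → ℝ measurable, bounded, with f(·, z) convex and G-Lipschitz with respect to the Euclidean norm for every z, and define the population risk F(w) = E_{z ~ D}[ f(w, z) ]. Let Ψ : W → ℝ be 1-strongly convex with respect to the Euclidean norm and satisfy 0 ≤ Ψ(w) ≤ B for all w ∈ W. For a sample S = (z_1,…,z_m) drawn i.i.d. from D, let RERM(S) = argmin_{w ∈ W} { (1/m) Σ_{i=1}^m f(w, z_i) + λ Ψ(w) } with λ = √(2G² / (m B)). Then E_{S ~ D^m}[ F(RERM(S)) ] ≤ inf_{w ∈ W} F(w) + √(8 G² B / m). -/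

import Mathlib

/-!
With `F_S` the empirical risk of the sample `S`, the regularized objective `F_S + λΨ` is
`λ`-strongly convex, so it grows quadratically away from its minimizer on `W`. Comparing the
minimizers `u`, `v` for two samples that differ in one point gives
`λ‖u - v‖² ≤ (2G/m)‖u - v‖`, hence `λ‖u - v‖ ≤ 2G/m`, and the loss at any point changes by at
most `2G²/(λm) = λB`: regularized ERM is uniformly replace-one stable. Swapping a sample point
with a fresh one does not change the joint law, so the expected population risk exceeds the
expected empirical risk by at most this stability constant. Finally the empirical risk of RERM
is at most `F_S(w) + λB` for every `w ∈ W`, and `F_S(w)` has expectation `F(w)`; the choice of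
`λ` makes the total `2λB = √(8G²B/m)`.
-/

open MeasureTheory Set Function Filter Topology

section StrongConvexity

variable {E : Type*} [NormedAddCommGroup E] [NormedSpace ℝ E] {s : Set E} {f g : E → ℝ} {m : ℝ}

lemma StrongConvexOn.const_mul {c : ℝ} (hc : 0 ≤ c) (hf : StrongConvexOn s m f) :
    StrongConvexOn s (c * m) fun x => c * f x := by
  refine ⟨hf.1, fun x hx y hy a b ha hb hab => ?_⟩
  have h := mul_le_mul_of_nonneg_left (hf.2 hx hy ha hb hab) hc
  simp only [smul_eq_mul] at h ⊢
  linarith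

lemma ConvexOn.add_strongConvexOn (hf : ConvexOn ℝ s f) (hg : StrongConvexOn s m g) :
    StrongConvexOn s m (f + g) := by
  have h := (uniformConvexOn_zero.2 hf).add hg
  rwa [zero_add] at h

lemma StrongConvexOn.add_sq_norm_sub_le_of_isMinOn (hf : StrongConvexOn s m f) {u w : E}
    (hu : u ∈ s) (hmin : IsMinOn f s u) (hw : w ∈ s) :
    f u + m / 2 * ‖u - w‖ ^ 2 ≤ f w := by
  set K := m / 2 * ‖u - w‖ ^ 2 with hK
  have hseg : ∀ t ∈ Ioo (0 : ℝ) 1, f u + (1 - t) * K ≤ f w := by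
    rintro t ⟨ht0, ht1⟩
    have h1t : (0 : ℝ) ≤ 1 - t := by linarith
    have hconv := hf.2 hu hw h1t ht0.le (sub_add_cancel 1 t)
    have hle : f u ≤ f ((1 - t) • u + t • w) := hmin (hf.1 hu hw h1t ht0.le (sub_add_cancel 1 t))
    simp only [smul_eq_mul, ← hK] at hconv
    refine le_of_mul_le_mul_left ?_ ht0
    linarith
  have hlim : Tendsto (fun t : ℝ => f u + (1 - t) * K) (𝓝[>] 0) (𝓝 (f u + (1 - 0) * K)) :=
    ((by fun_prop : Continuous fun t : ℝ => f u + (1 - t) * K).tendsto 0).mono_left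
      nhdsWithin_le_nhds
  simpa using le_of_tendsto hlim (eventually_of_mem (Ioo_mem_nhdsGT one_pos) hseg)

lemma StrongConvexOn.mul_norm_sub_le_of_isMinOn (hf : StrongConvexOn s m f)
    (hg : StrongConvexOn s m g) {u v : E} (hu : u ∈ s) (hv : v ∈ s) (hfu : IsMinOn f s u)
    (hgv : IsMinOn g s v) {L : ℝ} (hL : 0 ≤ L)
    (hfg : ∀ x ∈ s, ∀ y ∈ s, (f x - g x) - (f y - g y) ≤ L * ‖x - y‖) :
    m * ‖u - v‖ ≤ L := by
  have h₁ := hf.add_sq_norm_sub_le_of_isMinOn hu hfu hv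
  have h₂ := hg.add_sq_norm_sub_le_of_isMinOn hv hgv hu
  have h₃ := hfg v hv u hu
  rw [norm_sub_rev] at h₂ h₃
  rcases (norm_nonneg (u - v)).eq_or_lt with h | h
  · rw [← h, mul_zero]; exact hL
  · exact le_of_mul_le_mul_right (by nlinarith) h

end StrongConvexity

lemma MeasureTheory.measurePreserving_update {ι : Type*} [Fintype ι] [DecidableEq ι]
    {α : ι → Type*} [∀ j, MeasurableSpace (α j)] (μ : ∀ j, Measure (α j))
    [∀ j, IsProbabilityMeasure (μ j)] (i : ι) :
    MeasurePreserving (fun p : (∀ j, α j) × α i => update p.1 i p.2)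
      ((Measure.pi μ).prod (μ i)) (Measure.pi μ) := by
  refine ⟨measurable_update', (Measure.pi_eq fun s hs => ?_).symm⟩
  have hpre : (fun p : (∀ j, α j) × α i => update p.1 i p.2) ⁻¹' univ.pi s =
      univ.pi (update s i univ) ×ˢ s i := by
    ext ⟨S, z⟩
    simp only [mem_preimage, mem_univ_pi, mem_prod, forall_update_iff S (fun j x => x ∈ s j),
      forall_update_iff s (fun j t => S j ∈ t), mem_univ, true_and, and_comm]
  rw [Measure.map_apply measurable_update' (.univ_pi hs), hpre, Measure.prod_prod,
    Measure.pi_pi, Fintype.prod_eq_mul_prod_compl i, Fintype.prod_eq_mul_prod_compl i]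
  simp only [update_self, measure_univ, one_mul]
  rw [mul_comm]
  congr 1
  refine Finset.prod_congr rfl fun j hj => ?_
  rw [update_of_ne (Finset.mem_compl.1 hj ∘ Finset.mem_singleton.2)]

section ReplaceOne

variable {Z : Type*} [MeasurableSpace Z] {μ : Measure Z} [IsProbabilityMeasure μ]

lemma integrable_apply_of_abs_le {ι : Type*} [Fintype ι] {g : (ι → Z) → Z → ℝ}
    (hg : Measurable (uncurry g)) {C : ℝ} (hC : ∀ S z, |g S z| ≤ C) (i : ι) :
    Integrable (fun S => g S (S i)) (Measure.pi fun _ => μ) :=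
  .of_bound (hg.comp (measurable_id.prodMk (measurable_pi_apply i))).aestronglyMeasurable C
    (.of_forall fun _ => hC _ _)

lemma integral_apply_eq_integral_update {ι : Type*} [Fintype ι] [DecidableEq ι]
    {g : (ι → Z) → Z → ℝ} (hg : Measurable (uncurry g)) (i : ι) :
    ∫ S, g S (S i) ∂Measure.pi (fun _ => μ) =
      ∫ p, g (update p.1 i p.2) p.2 ∂(Measure.pi fun _ => μ).prod μ := by
  have hmp := measurePreserving_update (fun _ : ι => μ) i
  have hgi : Measurable fun S : ι → Z => g S (S i) :=
    hg.comp (measurable_id.prodMk (measurable_pi_apply i))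
  nth_rw 1 [← hmp.map_eq]
  rw [integral_map hmp.measurable.aemeasurable hgi.aestronglyMeasurable]
  simp only [update_self]

lemma integral_integral_le_integral_average_add_of_sub_update_le {m : ℕ} (hm : 0 < m)
    {g : (Fin m → Z) → Z → ℝ} (hg : Measurable (uncurry g)) {C : ℝ} (hC : ∀ S z, |g S z| ≤ C)
    {ε : ℝ} (hε : ∀ S i z, g S z - g (update S i z) z ≤ ε) :
    ∫ S, ∫ z, g S z ∂μ ∂Measure.pi (fun _ => μ) ≤
      ∫ S, (1 / m : ℝ) * ∑ i, g S (S i) ∂Measure.pi (fun _ => μ) + ε := by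
  set P := Measure.pi fun _ : Fin m => μ
  have hgP : Integrable (uncurry g) (P.prod μ) :=
    .of_bound hg.aestronglyMeasurable C (.of_forall fun p => hC _ _)
  have hupdate : ∀ i, Integrable (fun p : (Fin m → Z) × Z => g (update p.1 i p.2) p.2)
      (P.prod μ) := fun i =>
    .of_bound (hg.comp (measurable_update'.prodMk measurable_snd)).aestronglyMeasurable C
      (.of_forall fun p => hC _ _)
  have hi : ∀ i, ∫ S, ∫ z, g S z ∂μ ∂P ≤ ∫ S, g S (S i) ∂P + ε := fun i =>
    calc ∫ S, ∫ z, g S z ∂μ ∂P = ∫ p, g p.1 p.2 ∂P.prod μ := (integral_prod _ hgP).symm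
      _ ≤ ∫ p, (g (update p.1 i p.2) p.2 + ε) ∂P.prod μ :=
        integral_mono hgP ((hupdate i).add (integrable_const ε)) fun p => by
          linarith [hε p.1 i p.2]
      _ = ∫ S, g S (S i) ∂P + ε := by
        rw [integral_add (hupdate i) (integrable_const ε), integral_const, probReal_univ,
          one_smul, integral_apply_eq_integral_update hg]
  have hsum := Finset.sum_le_sum fun i (_ : i ∈ Finset.univ) => hi i
  simp only [Finset.sum_const, Finset.card_univ, Fintype.card_fin, nsmul_eq_mul,
    Finset.sum_add_distrib] at hsum
  rw [integral_const_mul, integral_finsetSum _ fun i _ => integrable_apply_of_abs_le hg hC i,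
    one_div, ← sub_le_iff_le_add, le_inv_mul_iff₀ (Nat.cast_pos.2 hm)]
  linarith

end ReplaceOne

section EmpiricalRisk

variable {E Z : Type*} {m : ℕ} {W : Set E} {f : E → Z → ℝ} {Ψ : E → ℝ} {lam : ℝ}

noncomputable def empiricalRisk (f : E → Z → ℝ) (S : Fin m → Z) (w : E) : ℝ :=
  (1 / m : ℝ) * ∑ i, f w (S i)

lemma empiricalRisk_sub_empiricalRisk_update (f : E → Z → ℝ) (S : Fin m → Z) (i : Fin m)
    (z : Z) (w : E) :
    empiricalRisk f S w - empiricalRisk f (update S i z) w = (f w (S i) - f w z) / m := by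
  have hS := Finset.add_sum_erase Finset.univ (fun j => f w (S j)) (Finset.mem_univ i)
  have hS' := Finset.add_sum_erase Finset.univ (fun j => f w (update S i z j))
    (Finset.mem_univ i)
  rw [Finset.sum_congr rfl fun j hj => by rw [update_of_ne (Finset.ne_of_mem_erase hj)]] at hS'
  simp only [empiricalRisk, ← hS, ← hS', update_self]
  ring

section Expectation

variable [MeasurableSpace Z] {μ : Measure Z} [IsProbabilityMeasure μ]

lemma integral_empiricalRisk (hm : 0 < m) {w : E} (hw : Integrable (f w) μ) :
    ∫ S, empiricalRisk f S w ∂Measure.pi (fun _ : Fin m => μ) = ∫ z, f w z ∂μ := by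
  have hcoord : ∀ i, ∫ S, f w (S i) ∂Measure.pi (fun _ : Fin m => μ) = ∫ z, f w z ∂μ :=
    fun i => integral_comp_eval hw.aestronglyMeasurable
  simp only [empiricalRisk]
  rw [integral_const_mul, integral_finsetSum _ fun i _ => integrable_comp_eval (i := i) hw]
  simp only [hcoord, Finset.sum_const, Finset.card_univ, Fintype.card_fin, nsmul_eq_mul]
  field_simp

lemma integral_empiricalRisk_le_of_isMinOn [MeasurableSpace E] (hm : 0 < m)
    (hf : Measurable (uncurry f)) {C : ℝ} (hC : ∀ w ∈ W, ∀ z, |f w z| ≤ C) {B : ℝ}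
    (hΨ : ∀ w ∈ W, 0 ≤ Ψ w ∧ Ψ w ≤ B) (hlam : 0 ≤ lam) {A : (Fin m → Z) → E}
    (hA : Measurable A) (hAW : ∀ S, A S ∈ W)
    (hmin : ∀ S, IsMinOn (fun w => empiricalRisk f S w + lam * Ψ w) W (A S)) ⦃w : E⦄
    (hw : w ∈ W) :
    ∫ S, empiricalRisk f S (A S) ∂Measure.pi (fun _ => μ) ≤ ∫ z, f w z ∂μ + lam * B := by
  have hfw : Measurable (uncurry fun (_ : Fin m → Z) z => f w z) :=
    hf.comp (measurable_const.prodMk measurable_snd)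
  have hfA : Measurable (uncurry fun S z => f (A S) z) := hf.comp (hA.prodMap measurable_id)
  have hμw : Integrable (f w) μ :=
    .of_bound (hf.comp (measurable_const.prodMk measurable_id)).aestronglyMeasurable C
      (.of_forall (hC w hw))
  have hintw : Integrable (fun S => empiricalRisk f S w) (Measure.pi fun _ => μ) :=
    (integrable_finsetSum _ fun i _ =>
      integrable_apply_of_abs_le hfw (fun _ => hC w hw) i).const_mul _
  have hintA : Integrable (fun S => empiricalRisk f S (A S)) (Measure.pi fun _ => μ) :=
    (integrable_finsetSum _ fun i _ =>
      integrable_apply_of_abs_le hfA (fun S => hC _ (hAW S)) i).const_mul _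
  calc ∫ S, empiricalRisk f S (A S) ∂Measure.pi (fun _ => μ)
      ≤ ∫ S, (empiricalRisk f S w + lam * B) ∂Measure.pi (fun _ => μ) := by
        refine integral_mono hintA (hintw.add (integrable_const _)) fun S => ?_
        have hΨA := mul_nonneg hlam (hΨ _ (hAW S)).1
        have hΨw := mul_le_mul_of_nonneg_left (hΨ w hw).2 hlam
        linarith [isMinOn_iff.1 (hmin S) w hw]
    _ = ∫ z, f w z ∂μ + lam * B := by
      rw [integral_add hintw (integrable_const _), integral_const, probReal_univ, one_smul,
        integral_empiricalRisk hm hμw]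

end Expectation

variable [NormedAddCommGroup E] [NormedSpace ℝ E] {G : ℝ}

lemma strongConvexOn_empiricalRisk_add (hf : ∀ z, ConvexOn ℝ W (f · z))
    (hΨ : StrongConvexOn W 1 Ψ) (hlam : 0 ≤ lam) (S : Fin m → Z) :
    StrongConvexOn W lam fun w => empiricalRisk f S w + lam * Ψ w := by
  have hsum : ConvexOn ℝ W fun w => ∑ i, f w (S i) := by
    refine ⟨hΨ.1, fun x hx y hy a b ha hb hab => ?_⟩
    simp only [smul_eq_mul, Finset.mul_sum, ← Finset.sum_add_distrib]
    exact Finset.sum_le_sum fun i _ => (hf (S i)).2 hx hy ha hb hab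
  have h := (hsum.smul (c := (1 / m : ℝ)) (by positivity)).add_strongConvexOn
    (hΨ.const_mul hlam)
  rw [mul_one] at h
  exact h

lemma mul_norm_sub_le_of_isMinOn_update (hG : 0 ≤ G) (hf : ∀ z, ConvexOn ℝ W (f · z))
    (hlip : ∀ z, ∀ w ∈ W, ∀ w' ∈ W, |f w z - f w' z| ≤ G * ‖w - w'‖)
    (hΨ : StrongConvexOn W 1 Ψ) (hlam : 0 ≤ lam) {S : Fin m → Z} {i : Fin m} {z : Z} {u v : E}
    (hu : u ∈ W) (hv : v ∈ W) (hSu : IsMinOn (fun w => empiricalRisk f S w + lam * Ψ w) W u)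
    (hSv : IsMinOn (fun w => empiricalRisk f (update S i z) w + lam * Ψ w) W v) :
    lam * ‖u - v‖ ≤ 2 * G / m := by
  refine (strongConvexOn_empiricalRisk_add hf hΨ hlam S).mul_norm_sub_le_of_isMinOn
    (strongConvexOn_empiricalRisk_add hf hΨ hlam _) hu hv hSu hSv (by positivity) ?_
  intro x hx y hy
  simp only [add_sub_add_right_eq_sub, empiricalRisk_sub_empiricalRisk_update]
  have h₁ := (abs_le.1 (hlip (S i) x hx y hy)).2
  have h₂ := (abs_le.1 (hlip z x hx y hy)).1
  rw [← sub_div, div_mul_eq_mul_div]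
  gcongr
  linarith

lemma sub_le_of_isMinOn_update (hm : 0 < m) (hG : 0 ≤ G) (hf : ∀ z, ConvexOn ℝ W (f · z))
    (hlip : ∀ z, ∀ w ∈ W, ∀ w' ∈ W, |f w z - f w' z| ≤ G * ‖w - w'‖)
    (hΨ : StrongConvexOn W 1 Ψ) {B : ℝ} (hlamB : lam ^ 2 * (m * B) = 2 * G ^ 2)
    (hlam : 0 ≤ lam) {S : Fin m → Z} {i : Fin m} {z z' : Z} {u v : E} (hu : u ∈ W) (hv : v ∈ W)
    (hSu : IsMinOn (fun w => empiricalRisk f S w + lam * Ψ w) W u)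
    (hSv : IsMinOn (fun w => empiricalRisk f (update S i z) w + lam * Ψ w) W v) :
    f u z' - f v z' ≤ lam * B := by
  have hloss : f u z' - f v z' ≤ G * ‖u - v‖ := (abs_le.1 (hlip z' u hu v hv)).2
  rcases hlam.eq_or_lt with rfl | hlam_pos
  · have hG0 : G = 0 := pow_eq_zero_iff two_ne_zero |>.1 (by linarith)
    simpa [hG0] using hloss
  · have hnorm := mul_norm_sub_le_of_isMinOn_update hG hf hlip hΨ hlam hu hv hSu hSv
    refine hloss.trans (le_of_mul_le_mul_left ?_ hlam_pos)
    calc lam * (G * ‖u - v‖) = G * (lam * ‖u - v‖) := by ring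
      _ ≤ G * (2 * G / m) := by gcongr
      _ = lam * (lam * B) := by
        field_simp
        linarith

end EmpiricalRisk

theorem rerm_generalization_general
    {d : ℕ} {Z : Type*} [MeasurableSpace Z]
    (μ : Measure Z) [IsProbabilityMeasure μ]
    (W : Set (EuclideanSpace ℝ (Fin d))) (hWne : W.Nonempty)
    (f : EuclideanSpace ℝ (Fin d) → Z → ℝ)
    (hfmeas : Measurable (Function.uncurry f))
    (C : ℝ) (hfbdd : ∀ w ∈ W, ∀ z, |f w z| ≤ C)
    (G : ℝ) (hG : 0 ≤ G)
    (hconv : ∀ z, ConvexOn ℝ W fun w => f w z)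
    (hlip : ∀ z, ∀ w ∈ W, ∀ w' ∈ W, |f w z - f w' z| ≤ G * ‖w - w'‖)
    (Ψ : EuclideanSpace ℝ (Fin d) → ℝ)
    (hΨ : StrongConvexOn W 1 Ψ)
    (B : ℝ) (hB : 0 < B)
    (hΨbdd : ∀ w ∈ W, 0 ≤ Ψ w ∧ Ψ w ≤ B)
    (m : ℕ) (hm : 0 < m)
    (lam : ℝ) (hlam : lam = Real.sqrt (2 * G ^ 2 / (m * B)))
    (RERM : (Fin m → Z) → EuclideanSpace ℝ (Fin d))
    (hRERMmeas : Measurable RERM)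
    (hRERM : ∀ S : Fin m → Z, RERM S ∈ W ∧ ∀ w ∈ W,
      (1 / m : ℝ) * ∑ i, f (RERM S) (S i) + lam * Ψ (RERM S) ≤
        (1 / m : ℝ) * ∑ i, f w (S i) + lam * Ψ w) :
    (∫ S : Fin m → Z, ∫ z, f (RERM S) z ∂μ ∂Measure.pi fun _ => μ) ≤
      (⨅ w : W, ∫ z, f (w : EuclideanSpace ℝ (Fin d)) z ∂μ) +
        Real.sqrt (8 * G ^ 2 * B / m) := by
  have hlam0 : 0 ≤ lam := hlam ▸ Real.sqrt_nonneg _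
  have hmB : (0 : ℝ) < m * B := mul_pos (Nat.cast_pos.2 hm) hB
  have hlamB : lam ^ 2 * (m * B) = 2 * G ^ 2 := by
    rw [hlam, Real.sq_sqrt (by positivity)]
    field_simp
  have hmin : ∀ S, IsMinOn (fun w => empiricalRisk f S w + lam * Ψ w) W (RERM S) :=
    fun S w hw => (hRERM S).2 w hw
  have hgen : ∫ S, ∫ z, f (RERM S) z ∂μ ∂Measure.pi (fun _ => μ) ≤
      ∫ S, empiricalRisk f S (RERM S) ∂Measure.pi (fun _ => μ) + lam * B :=
    integral_integral_le_integral_average_add_of_sub_update_le (g := fun S z => f (RERM S) z) hm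
      (hfmeas.comp (hRERMmeas.prodMap measurable_id)) (fun S z => hfbdd _ (hRERM S).1 z)
      fun S i z => sub_le_of_isMinOn_update hm hG hconv hlip hΨ hlamB hlam0 (hRERM S).1
        (hRERM (update S i z)).1 (hmin S) (hmin (update S i z))
  have hrisk := integral_empiricalRisk_le_of_isMinOn (μ := μ) hm hfmeas hfbdd hΨbdd hlam0
    hRERMmeas (fun S => (hRERM S).1) hmin
  have hsqrt : Real.sqrt (8 * G ^ 2 * B / m) = 2 * (lam * B) := by
    have h : 8 * G ^ 2 * B / m = (2 * B) ^ 2 * (2 * G ^ 2 / (m * B)) := by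
      field_simp
      ring
    rw [h, Real.sqrt_mul (by positivity), Real.sqrt_sq (by positivity), hlam]
    ring
  have : Nonempty W := hWne.to_subtype
  rw [hsqrt, ← sub_le_iff_le_add]
  exact le_ciInf fun w => by linarith [hrisk w.2]

/-- Generalization of regularized ERM: with a `1`-strongly convex regularizer `Ψ`
bounded by `B` on `W`, convex `G`-Lipschitz bounded losses, and
`λ = √(2G²/(mB))`, the expected population risk of the regularized ERM is within
`√(8G²B/m)` of the best population risk in `W`. -/
theorem rerm_generalization
    {d : ℕ} {Z : Type*} [MeasurableSpace Z]
    (μ : Measure Z) [IsProbabilityMeasure μ]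
    (W : Set (EuclideanSpace ℝ (Fin d))) (hW : Convex ℝ W) (hWne : W.Nonempty)
    (f : EuclideanSpace ℝ (Fin d) → Z → ℝ)
    (hfmeas : Measurable (Function.uncurry f))
    (C : ℝ) (hfbdd : ∀ w ∈ W, ∀ z, |f w z| ≤ C)
    (G : ℝ) (hG : 0 ≤ G)
    (hconv : ∀ z, ConvexOn ℝ W fun w => f w z)
    (hlip : ∀ z, ∀ w ∈ W, ∀ w' ∈ W, |f w z - f w' z| ≤ G * ‖w - w'‖)
    (Ψ : EuclideanSpace ℝ (Fin d) → ℝ)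
    (hΨ : StrongConvexOn W 1 Ψ)
    (B : ℝ) (hB : 0 < B)
    (hΨbdd : ∀ w ∈ W, 0 ≤ Ψ w ∧ Ψ w ≤ B)
    (m : ℕ) (hm : 0 < m)
    (lam : ℝ) (hlam : lam = Real.sqrt (2 * G ^ 2 / (m * B)))
    (RERM : (Fin m → Z) → EuclideanSpace ℝ (Fin d))
    (hRERMmeas : Measurable RERM)
    (hRERM : ∀ S : Fin m → Z, RERM S ∈ W ∧ ∀ w ∈ W,
      (1 / m : ℝ) * ∑ i, f (RERM S) (S i) + lam * Ψ (RERM S) ≤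
        (1 / m : ℝ) * ∑ i, f w (S i) + lam * Ψ w) :
    (∫ S : Fin m → Z, ∫ z, f (RERM S) z ∂μ ∂Measure.pi fun _ => μ) ≤
      (⨅ w : W, ∫ z, f (w : EuclideanSpace ℝ (Fin d)) z ∂μ) +
        Real.sqrt (8 * G ^ 2 * B / m) :=
  rerm_generalization_general μ W hWne f hfmeas C hfbdd G hG hconv hlip Ψ hΨ B hB hΨbdd m hm lam
    hlam RERM hRERMmeas hRERM
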